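/- arXiv:2509.21235 — 2 statements merged into one kernel-verified Lean document; each statement's English description precedes it below -/
import Mathlib

section
/- Let E₁,…,E_{m−1} be l × l real matrices with Eᵢᵀ = −Eᵢ, Eᵢ² = −I, and Eᵢ·Eⱼ = −Eⱼ·Eᵢ for i ≠ j; let α, β > 0 with α² + β² = 1; and let (u,v) ∈ V₂^{α,β}. Suppose y ∈ ℝˡ satisfies |y| = β, ⟨y,u⟩ = 0, ⟨y,v⟩ = 0, and ⟨y, Eᵢu⟩ = 0 for 1 ≤ i ≤ m−1. Then the curve δ(t) = (u, cos t·v + sin t·y) satisfies δ(t) ∈ V₂^{α,β} for all t ∈ ℝ and δ(0) = (u,v); moreover, the curve t ↦ ξ(δ(t)), where ξ(u,v) = (−(β/α)·u, (α/β)·v), has derivative at t = 0 equal to (α/β) times the derivative of δ at t = 0, and δ′(0) = (0, y). -/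
/-!
The curve rotates `v` towards `y` inside the plane they span; this plane is orthogonal to `u`
and to every `Eᵢu`, and `v ⊥ y` with `|y| = |v|`, so every defining condition of `V₂^{α,β}`
persists. Since `ξ` is linear, `(ξ ∘ δ)′(0) = ξ(δ′(0)) = ξ(0, y) = (α/β)·(0, y)`.
-/

open scoped RealInnerProductSpace

/-- The action of an `l × l` real matrix on `EuclideanSpace ℝ (Fin l)`. -/
noncomputable def matAct {l : ℕ} (A : Matrix (Fin l) (Fin l) ℝ)
    (u : EuclideanSpace ℝ (Fin l)) : EuclideanSpace ℝ (Fin l) :=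
  (WithLp.equiv 2 (Fin l → ℝ)).symm (A.mulVec (WithLp.equiv 2 (Fin l → ℝ) u))

/-- Pinkall–Thorbergsson's deformed Clifford–Stiefel manifold `V₂^{α,β}`. -/
noncomputable def cliffordV2ab (l m : ℕ) (E : Fin (m - 1) → Matrix (Fin l) (Fin l) ℝ)
    (α β : ℝ) : Set (EuclideanSpace ℝ (Fin l) × EuclideanSpace ℝ (Fin l)) :=
  {p | ‖p.1‖ = α ∧ ‖p.2‖ = β ∧ ⟪p.1, p.2⟫ = 0 ∧
    ∀ i : Fin (m - 1), ⟪matAct (E i) p.1, p.2⟫ = 0}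

/-- The unit normal field `ξ(u,v) = (−(β/α)·u, (α/β)·v)` on `V₂^{α,β}`. -/
noncomputable def xiField {l : ℕ} (α β : ℝ)
    (p : EuclideanSpace ℝ (Fin l) × EuclideanSpace ℝ (Fin l)) :
    EuclideanSpace ℝ (Fin l) × EuclideanSpace ℝ (Fin l) :=
  ((-(β / α)) • p.1, (α / β) • p.2)

section RotationInPlane

variable {F : Type*} [NormedAddCommGroup F] [InnerProductSpace ℝ F]

theorem norm_cos_smul_add_sin_smul {v y : F} (hvy : ⟪v, y⟫ = 0) (hnorm : ‖y‖ = ‖v‖)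
    (t : ℝ) : ‖Real.cos t • v + Real.sin t • y‖ = ‖v‖ := by
  have hsq : ‖Real.cos t • v + Real.sin t • y‖ ^ 2 = ‖v‖ ^ 2 := by
    rw [norm_add_sq_real, real_inner_smul_left, real_inner_smul_right, hvy, norm_smul,
      norm_smul, hnorm, Real.norm_eq_abs, Real.norm_eq_abs, mul_pow, mul_pow, sq_abs, sq_abs]
    linear_combination ‖v‖ ^ 2 * Real.cos_sq_add_sin_sq t
  exact (pow_left_inj₀ (norm_nonneg _) (norm_nonneg _) two_ne_zero).mp hsq

theorem inner_cos_smul_add_sin_smul_eq_zero {x v y : F} (hxv : ⟪x, v⟫ = 0)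
    (hxy : ⟪x, y⟫ = 0) (t : ℝ) : ⟪x, Real.cos t • v + Real.sin t • y⟫ = 0 := by
  rw [inner_add_right, real_inner_smul_right, real_inner_smul_right, hxv, hxy]
  ring

theorem hasDerivAt_cos_smul_add_sin_smul_zero (v y : F) :
    HasDerivAt (fun t : ℝ => Real.cos t • v + Real.sin t • y) y 0 := by
  have h := ((Real.hasDerivAt_cos 0).smul_const v).add ((Real.hasDerivAt_sin 0).smul_const y)
  rwa [Real.sin_zero, Real.cos_zero, neg_zero, zero_smul, one_smul, zero_add] at h

end RotationInPlane

theorem cos_smul_add_sin_smul_mem_cliffordV2ab {l m : ℕ}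
    {E : Fin (m - 1) → Matrix (Fin l) (Fin l) ℝ} {α β : ℝ}
    {u v y : EuclideanSpace ℝ (Fin l)} (huv : (u, v) ∈ cliffordV2ab l m E α β)
    (hy : ‖y‖ = β) (hyu : ⟪y, u⟫ = 0) (hyv : ⟪y, v⟫ = 0)
    (hyE : ∀ i : Fin (m - 1), ⟪y, matAct (E i) u⟫ = 0) (t : ℝ) :
    (u, Real.cos t • v + Real.sin t • y) ∈ cliffordV2ab l m E α β := by
  obtain ⟨hu, hv, hvu, hEu⟩ := huv
  refine ⟨hu, ?_, ?_, fun i => ?_⟩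
  · rw [norm_cos_smul_add_sin_smul (real_inner_comm v y ▸ hyv) (hy.trans hv.symm)]
    exact hv
  · exact inner_cos_smul_add_sin_smul_eq_zero hvu (real_inner_comm u y ▸ hyu) t
  · exact inner_cos_smul_add_sin_smul_eq_zero (hEu i) (real_inner_comm _ y ▸ hyE i) t

theorem HasDerivAt.xiField {l : ℕ} (α β : ℝ)
    {γ : ℝ → EuclideanSpace ℝ (Fin l) × EuclideanSpace ℝ (Fin l)}
    {γ' : EuclideanSpace ℝ (Fin l) × EuclideanSpace ℝ (Fin l)} {t : ℝ}
    (hγ : HasDerivAt γ γ' t) : HasDerivAt (fun s => xiField α β (γ s)) (xiField α β γ') t :=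
  let L := ((-(β / α)) • ContinuousLinearMap.fst ℝ (EuclideanSpace ℝ (Fin l))
      (EuclideanSpace ℝ (Fin l))).prod
    ((α / β) • ContinuousLinearMap.snd ℝ (EuclideanSpace ℝ (Fin l)) (EuclideanSpace ℝ (Fin l)))
  L.hasFDerivAt.comp_hasDerivAt t hγ

theorem xiField_zero_fst {l : ℕ} (α β : ℝ) (y : EuclideanSpace ℝ (Fin l)) :
    xiField α β (0, y) = (α / β) • ((0 : EuclideanSpace ℝ (Fin l)), y) := by
  simp [xiField]

theorem principal_curvature_neg_alpha_div_beta_general (l m : ℕ)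
    (E : Fin (m - 1) → Matrix (Fin l) (Fin l) ℝ)
    (α β : ℝ)
    (u v : EuclideanSpace ℝ (Fin l)) (huv : (u, v) ∈ cliffordV2ab l m E α β)
    (y : EuclideanSpace ℝ (Fin l)) (hy : ‖y‖ = β) (hyu : ⟪y, u⟫ = 0) (hyv : ⟪y, v⟫ = 0)
    (hyE : ∀ i : Fin (m - 1), ⟪y, matAct (E i) u⟫ = 0) :
    (∀ t : ℝ, (u, Real.cos t • v + Real.sin t • y) ∈ cliffordV2ab l m E α β) ∧
    (u, (Real.cos (0:ℝ)) • v + (Real.sin (0:ℝ)) • y) = (u, v) ∧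
    deriv (fun t : ℝ => xiField α β (u, Real.cos t • v + Real.sin t • y)) 0 =
      (α / β) • deriv (fun t : ℝ =>
        ((u, Real.cos t • v + Real.sin t • y) :
          EuclideanSpace ℝ (Fin l) × EuclideanSpace ℝ (Fin l))) 0 ∧
    deriv (fun t : ℝ =>
        ((u, Real.cos t • v + Real.sin t • y) :
          EuclideanSpace ℝ (Fin l) × EuclideanSpace ℝ (Fin l))) 0 = (0, y) := by
  have hδ : HasDerivAt (fun t : ℝ => ((u, Real.cos t • v + Real.sin t • y) :
      EuclideanSpace ℝ (Fin l) × EuclideanSpace ℝ (Fin l))) (0, y) 0 :=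
    (hasDerivAt_const 0 u).prodMk (hasDerivAt_cos_smul_add_sin_smul_zero v y)
  refine ⟨cos_smul_add_sin_smul_mem_cliffordV2ab huv hy hyu hyv hyE, by simp, ?_, hδ.deriv⟩
  rw [(hδ.xiField α β).deriv, hδ.deriv, xiField_zero_fst]

/-- Let `E₁,…,E_{m−1}` be a Clifford system, `α, β > 0` with `α² + β² = 1`, and
`(u,v) ∈ V₂^{α,β}`.  Suppose `y ∈ ℝˡ` satisfies `|y| = β`, `⟨y,u⟩ = 0`, `⟨y,v⟩ = 0`,
and `⟨y, Eᵢu⟩ = 0` for all `i`.  Then the curve `δ(t) = (u, cos t·v + sin t·y)` lies in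
`V₂^{α,β}`, passes through `(u,v)` at `t = 0`, and the curve `t ↦ ξ(δ(t))` has derivative
at `t = 0` equal to `(α/β)` times `δ′(0)`, where `δ′(0) = (0, y)`. -/
theorem principal_curvature_neg_alpha_div_beta (l m : ℕ)
    (E : Fin (m - 1) → Matrix (Fin l) (Fin l) ℝ)
    (hskew : ∀ i, (E i).transpose = -(E i))
    (hsq : ∀ i, E i * E i = -1)
    (hanti : ∀ i j, i ≠ j → E i * E j = -(E j * E i))
    (α β : ℝ) (hα : 0 < α) (hβ : 0 < β) (hαβ : α ^ 2 + β ^ 2 = 1)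
    (u v : EuclideanSpace ℝ (Fin l)) (huv : (u, v) ∈ cliffordV2ab l m E α β)
    (y : EuclideanSpace ℝ (Fin l)) (hy : ‖y‖ = β) (hyu : ⟪y, u⟫ = 0) (hyv : ⟪y, v⟫ = 0)
    (hyE : ∀ i : Fin (m - 1), ⟪y, matAct (E i) u⟫ = 0) :
    (∀ t : ℝ, (u, Real.cos t • v + Real.sin t • y) ∈ cliffordV2ab l m E α β) ∧
    (u, (Real.cos (0:ℝ)) • v + (Real.sin (0:ℝ)) • y) = (u, v) ∧
    deriv (fun t : ℝ => xiField α β (u, Real.cos t • v + Real.sin t • y)) 0 =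
      (α / β) • deriv (fun t : ℝ =>
        ((u, Real.cos t • v + Real.sin t • y) :
          EuclideanSpace ℝ (Fin l) × EuclideanSpace ℝ (Fin l))) 0 ∧
    deriv (fun t : ℝ =>
        ((u, Real.cos t • v + Real.sin t • y) :
          EuclideanSpace ℝ (Fin l) × EuclideanSpace ℝ (Fin l))) 0 = (0, y) :=
  principal_curvature_neg_alpha_div_beta_general l m E α β u v huv y hy hyu hyv hyE
end

section
/- Let E₁,…,E_{m−1} be l × l real matrices with Eᵢᵀ = −Eᵢ, Eᵢ² = −I, and Eᵢ·Eⱼ = −Eⱼ·Eᵢ for i ≠ j; let α, β > 0 with α² + β² = 1; and let (u,v) ∈ V₂^{α,β}. Then the curve ε(t) = (cos t·u + (α/β)·sin t·v, −(β/α)·sin t·u + cos t·v) satisfies ε(t) ∈ V₂^{α,β} for all t ∈ ℝ and ε(0) = (u,v); moreover, the curve t ↦ ξ(ε(t)), where ξ(u,v) = (−(β/α)·u, (α/β)·v), has derivative at t = 0 equal to η(u,v) = (−v, −u). -/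
open scoped RealInnerProductSpace

/-!
The curve `ε` stays in the plane spanned by `u` and `v`, and rotates the orthonormal pair
`(u/α, v/β)`; so its components keep the lengths `α`, `β` and stay orthogonal. Since each `Eᵢ` is
skew, `(x, y) ↦ ⟪Eᵢ x, y⟫` is alternating, hence on that plane it is a multiple of
`⟪Eᵢ u, v⟫ = 0`. Finally `ξ` is linear, so
`(ξ ∘ ε)'(0) = ξ(ε'(0)) = ξ((α/β)·v, -(β/α)·u) = (-v, -u)`.
-/

section Plane

variable {F : Type*} [NormedAddCommGroup F] [InnerProductSpace ℝ F]

theorem inner_smul_add_smul_of_inner_eq_zero {u v : F} (huv : ⟪u, v⟫ = 0) (a b c d : ℝ) :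
    ⟪a • u + b • v, c • u + d • v⟫ = a * c * ‖u‖ ^ 2 + b * d * ‖v‖ ^ 2 := by
  have hvu : ⟪v, u⟫ = 0 := by rw [real_inner_comm, huv]
  simp only [inner_add_left, inner_add_right, real_inner_smul_left, real_inner_smul_right,
    real_inner_self_eq_norm_sq, huv, hvu]
  ring

-- Polarizing `⟪T x, x⟫ = 0` shows that `(x, y) ↦ ⟪T x, y⟫` is alternating.
theorem inner_map_smul_add_smul_of_inner_map_self_eq_zero (T : F →ₗ[ℝ] F)
    (hT : ∀ x, ⟪T x, x⟫ = 0) (u v : F) (a b c d : ℝ) :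
    ⟪T (a • u + b • v), c • u + d • v⟫ = (a * d - b * c) * ⟪T u, v⟫ := by
  have hvu : ⟪T v, u⟫ = -⟪T u, v⟫ := by
    have h := hT (u + v)
    simp only [map_add, inner_add_left, inner_add_right, hT u, hT v] at h
    linarith
  simp only [map_add, map_smul, inner_add_left, inner_add_right, real_inner_smul_left,
    real_inner_smul_right, hT u, hT v, hvu]
  ring

end Plane

theorem matAct_eq_toEuclideanLin {l : ℕ} (A : Matrix (Fin l) (Fin l) ℝ)
    (x : EuclideanSpace ℝ (Fin l)) : matAct A x = Matrix.toEuclideanLin A x :=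
  rfl

theorem inner_matAct_self_of_transpose_eq_neg {l : ℕ} {A : Matrix (Fin l) (Fin l) ℝ}
    (hA : A.transpose = -A) (x : EuclideanSpace ℝ (Fin l)) : ⟪matAct A x, x⟫ = 0 := by
  have h := LinearMap.adjoint_inner_left (Matrix.toEuclideanLin A) x x
  rw [← Matrix.toEuclideanLin_conjTranspose_eq_adjoint,
    Matrix.conjTranspose_eq_transpose_of_trivial, hA, map_neg, LinearMap.neg_apply,
    inner_neg_left] at h
  rw [matAct_eq_toEuclideanLin]
  linarith [real_inner_comm x (Matrix.toEuclideanLin A x)]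

noncomputable def epsCurve {l : ℕ} (α β : ℝ) (u v : EuclideanSpace ℝ (Fin l)) (t : ℝ) :
    EuclideanSpace ℝ (Fin l) × EuclideanSpace ℝ (Fin l) :=
  (Real.cos t • u + ((α / β) * Real.sin t) • v, (-(β / α) * Real.sin t) • u + Real.cos t • v)

theorem epsCurve_mem_cliffordV2ab {l m : ℕ} {E : Fin (m - 1) → Matrix (Fin l) (Fin l) ℝ}
    (hskew : ∀ i, (E i).transpose = -(E i)) {α β : ℝ} (hα : 0 < α) (hβ : 0 < β)
    {u v : EuclideanSpace ℝ (Fin l)} (huv : (u, v) ∈ cliffordV2ab l m E α β) (t : ℝ) :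
    epsCurve α β u v t ∈ cliffordV2ab l m E α β := by
  obtain ⟨hu, hv, hperp, hE⟩ : ‖u‖ = α ∧ ‖v‖ = β ∧ ⟪u, v⟫ = 0 ∧
      ∀ i, ⟪matAct (E i) u, v⟫ = 0 := huv
  dsimp only [epsCurve]
  have hgram := inner_smul_add_smul_of_inner_eq_zero hperp
  have hpyth := Real.sin_sq_add_cos_sq t
  refine ⟨?_, ?_, ?_, fun i => ?_⟩
  · rw [← pow_left_inj₀ (norm_nonneg _) hα.le two_ne_zero, ← real_inner_self_eq_norm_sq,
      hgram, hu, hv]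
    field_simp
    linear_combination hpyth
  · rw [← pow_left_inj₀ (norm_nonneg _) hβ.le two_ne_zero, ← real_inner_self_eq_norm_sq,
      hgram, hu, hv]
    field_simp
    linear_combination hpyth
  · rw [hgram, hu, hv]
    field_simp
    ring
  · have hT := inner_matAct_self_of_transpose_eq_neg (hskew i)
    simp only [matAct_eq_toEuclideanLin] at hT hE ⊢
    rw [inner_map_smul_add_smul_of_inner_map_self_eq_zero _ hT, hE i, mul_zero]

theorem epsCurve_zero {l : ℕ} (α β : ℝ) (u v : EuclideanSpace ℝ (Fin l)) :
    epsCurve α β u v 0 = (u, v) := by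
  simp [epsCurve]

theorem hasDerivAt_epsCurve {l : ℕ} (α β : ℝ) (u v : EuclideanSpace ℝ (Fin l)) (t : ℝ) :
    HasDerivAt (epsCurve α β u v)
      ((-Real.sin t) • u + ((α / β) * Real.cos t) • v,
        (-(β / α) * Real.cos t) • u + (-Real.sin t) • v) t :=
  (((Real.hasDerivAt_cos t).smul_const u).add
      (((Real.hasDerivAt_sin t).const_mul (α / β)).smul_const v)).prodMk
    ((((Real.hasDerivAt_sin t).const_mul (-(β / α))).smul_const u).add
      ((Real.hasDerivAt_cos t).smul_const v))

theorem xiField_epsCurve_deriv_zero {l : ℕ} {α β : ℝ} (hα : α ≠ 0) (hβ : β ≠ 0)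
    (u v : EuclideanSpace ℝ (Fin l)) :
    xiField α β ((-Real.sin 0) • u + ((α / β) * Real.cos 0) • v,
        (-(β / α) * Real.cos 0) • u + (-Real.sin 0) • v) = (-v, -u) := by
  simp only [xiField, Real.sin_zero, Real.cos_zero, neg_zero, zero_smul, zero_add, add_zero,
    mul_one, smul_smul]
  rw [show -(β / α) * (α / β) = -1 by field_simp, show α / β * -(β / α) = -1 by field_simp,
    neg_one_smul, neg_one_smul]

theorem principal_curvature_zero_general (l m : ℕ)
    (E : Fin (m - 1) → Matrix (Fin l) (Fin l) ℝ)
    (hskew : ∀ i, (E i).transpose = -(E i))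
    (α β : ℝ) (hα : 0 < α) (hβ : 0 < β)
    (u v : EuclideanSpace ℝ (Fin l)) (huv : (u, v) ∈ cliffordV2ab l m E α β) :
    (∀ t : ℝ,
      (Real.cos t • u + ((α / β) * Real.sin t) • v,
        (-(β / α) * Real.sin t) • u + Real.cos t • v) ∈ cliffordV2ab l m E α β) ∧
    ((Real.cos (0:ℝ)) • u + ((α / β) * Real.sin (0:ℝ)) • v,
      (-(β / α) * Real.sin (0:ℝ)) • u + (Real.cos (0:ℝ)) • v) = (u, v) ∧
    deriv (fun t : ℝ => xiField α β
        (Real.cos t • u + ((α / β) * Real.sin t) • v,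
          (-(β / α) * Real.sin t) • u + Real.cos t • v)) 0 = (-v, -u) := by
  refine ⟨epsCurve_mem_cliffordV2ab hskew hα hβ huv, epsCurve_zero α β u v, ?_⟩
  have hξ := (hasDerivAt_epsCurve α β u v 0).xiField α β
  rw [xiField_epsCurve_deriv_zero hα.ne' hβ.ne'] at hξ
  exact hξ.deriv

/-- Let `E₁,…,E_{m−1}` be a Clifford system, `α, β > 0` with `α² + β² = 1`, and
`(u,v) ∈ V₂^{α,β}`.  Then the curve
`ε(t) = (cos t·u + (α/β)·sin t·v, −(β/α)·sin t·u + cos t·v)` lies in `V₂^{α,β}`,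
passes through `(u,v)` at `t = 0`, and the curve `t ↦ ξ(ε(t))` has derivative at
`t = 0` equal to `η(u,v) = (−v, −u)`. -/
theorem principal_curvature_zero (l m : ℕ)
    (E : Fin (m - 1) → Matrix (Fin l) (Fin l) ℝ)
    (hskew : ∀ i, (E i).transpose = -(E i))
    (hsq : ∀ i, E i * E i = -1)
    (hanti : ∀ i j, i ≠ j → E i * E j = -(E j * E i))
    (α β : ℝ) (hα : 0 < α) (hβ : 0 < β) (hαβ : α ^ 2 + β ^ 2 = 1)
    (u v : EuclideanSpace ℝ (Fin l)) (huv : (u, v) ∈ cliffordV2ab l m E α β) :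
    (∀ t : ℝ,
      (Real.cos t • u + ((α / β) * Real.sin t) • v,
        (-(β / α) * Real.sin t) • u + Real.cos t • v) ∈ cliffordV2ab l m E α β) ∧
    ((Real.cos (0:ℝ)) • u + ((α / β) * Real.sin (0:ℝ)) • v,
      (-(β / α) * Real.sin (0:ℝ)) • u + (Real.cos (0:ℝ)) • v) = (u, v) ∧
    deriv (fun t : ℝ => xiField α β
        (Real.cos t • u + ((α / β) * Real.sin t) • v,
          (-(β / α) * Real.sin t) • u + Real.cos t • v)) 0 = (-v, -u) :=
  principal_curvature_zero_general l m E hskew α β hα hβ u v huv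
end
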